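/- arXiv:math/0702772 — 2 statements merged into one kernel-verified Lean document; each statement's English description precedes it below -/
import Mathlib

section
/- Two real vector space structures on the same set V, both compatible with a fixed smooth manifold structure on V, whose scalar multiplication maps (homotheties) commute with each other (h¹_t ∘ h²_s = h²_s ∘ h¹_t for all s, t ≥ 0), coincide: they have the same zero, the same addition, and the same scalar multiplication. -/
open Filter Set

/-- Two real vector space structures on the same smooth manifold `V` (one the
ambient normed-space structure, the other given by `add₂`, `smul₂`, `zero₂`,
`neg₂` satisfying the vector space axioms and smooth with respect to the fixed
smooth structure) whose homotheties commute, coincide: same zero, same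
addition, and same scalar multiplication. -/
theorem stmt6 {V : Type*} [NormedAddCommGroup V] [NormedSpace ℝ V] [FiniteDimensional ℝ V]
    (add₂ : V → V → V) (smul₂ : ℝ → V → V) (zero₂ : V) (neg₂ : V → V)
    (h_add_assoc : ∀ x y z, add₂ (add₂ x y) z = add₂ x (add₂ y z))
    (h_add_comm : ∀ x y, add₂ x y = add₂ y x)
    (h_zero : ∀ x, add₂ zero₂ x = x)
    (h_neg : ∀ x, add₂ (neg₂ x) x = zero₂)
    (h_one : ∀ x, smul₂ 1 x = x)
    (h_mul : ∀ t s x, smul₂ t (smul₂ s x) = smul₂ (t * s) x)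
    (h_distrib : ∀ t x y, smul₂ t (add₂ x y) = add₂ (smul₂ t x) (smul₂ t y))
    (h_distrib' : ∀ t s x, smul₂ (t + s) x = add₂ (smul₂ t x) (smul₂ s x))
    (h_smul_smooth : ContDiff ℝ (⊤ : ℕ∞) (fun p : ℝ × V => smul₂ p.1 p.2))
    (h_add_smooth : ContDiff ℝ (⊤ : ℕ∞) (fun p : V × V => add₂ p.1 p.2))
    (h_comm : ∀ t s : ℝ, 0 ≤ t → 0 ≤ s → ∀ x, smul₂ t (s • x) = s • smul₂ t x) :
    zero₂ = 0 ∧ (∀ x y, add₂ x y = x + y) ∧ (∀ t x, smul₂ t x = t • x) := by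
  -- idempotents for `add₂` are `zero₂`
  have hcancel : ∀ a, add₂ a a = a → a = zero₂ := by
    intro a h
    have h1 : add₂ (neg₂ a) a = zero₂ := h_neg a
    nth_rewrite 2 [← h] at h1
    rw [← h_add_assoc, h_neg, h_zero] at h1
    exact h1
  have hszero : ∀ t, smul₂ t zero₂ = zero₂ := by
    intro t
    refine hcancel _ ?_
    rw [← h_distrib, h_zero]
  have h0x : ∀ x, smul₂ 0 x = zero₂ := by
    intro x
    refine hcancel _ ?_
    rw [← h_distrib', add_zero]
  have hz : zero₂ = 0 := by
    have h1 := h_comm 0 0 le_rfl le_rfl (0 : V)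
    rw [zero_smul, zero_smul, h0x] at h1
    exact h1
  have h0x' : ∀ x, smul₂ 0 x = 0 := fun x => (h0x x).trans hz
  -- differentiability facts
  have hγd : ∀ x, Differentiable ℝ (fun t => smul₂ t x) := by
    intro x
    exact (h_smul_smooth.comp (ContDiff.prodMk contDiff_id contDiff_const)).differentiable (by simp)
  have hfd : ∀ t, Differentiable ℝ (fun x => smul₂ t x) := by
    intro t
    exact (h_smul_smooth.comp (ContDiff.prodMk contDiff_const contDiff_id)).differentiable (by simp)
  have hGd : Differentiable ℝ (fun p : V × V => add₂ p.1 p.2) :=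
    h_add_smooth.differentiable (by simp)
  -- each `smul₂ t` (t ≥ 0) is additive for the ambient structure
  have hlin : ∀ t : ℝ, 0 ≤ t → ∀ x y, smul₂ t (x + y) = smul₂ t x + smul₂ t y := by
    intro t ht
    have hf0 : smul₂ t 0 = 0 := by rw [← hz, hszero]
    have key : ∀ v, smul₂ t v = fderiv ℝ (fun x => smul₂ t x) 0 v := by
      intro v
      have hd : HasFDerivAt (fun x => smul₂ t x) (fderiv ℝ (fun x => smul₂ t x) 0) 0 :=
        ((hfd t) 0).hasFDerivAt
      have hlim := hd.lim v (c := fun n : ℝ => n) (l := atTop) tendsto_abs_atTop_atTop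
      have heq : ∀ᶠ n : ℝ in atTop,
          n • (smul₂ t ((0 : V) + n⁻¹ • v) - smul₂ t 0) = smul₂ t v := by
        filter_upwards [eventually_gt_atTop (0 : ℝ)] with n hn
        rw [zero_add, hf0, sub_zero, h_comm t n⁻¹ ht (by positivity), smul_smul,
          mul_inv_cancel₀ hn.ne', one_smul]
      have hlim' : Tendsto (fun _ : ℝ => smul₂ t v) atTop
          (nhds (fderiv ℝ (fun x => smul₂ t x) 0 v)) := hlim.congr' heq
      exact tendsto_nhds_unique tendsto_const_nhds hlim'
    intro x y
    rw [key (x + y), key x, key y, map_add]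
  -- the derivative of the flow at time 0
  set B : V → V := fun x => deriv (fun t => smul₂ t x) 0 with hBdef
  have hB : ∀ x, HasDerivAt (fun t => smul₂ t x) (B x) 0 := fun x => ((hγd x) 0).hasDerivAt
  -- B intertwines the scalar actions
  have hBsmul₂ : ∀ (s : ℝ) (x : V), B (smul₂ s x) = s • B x := by
    intro s x
    have h1 : HasDerivAt (fun u : ℝ => u * s) s 0 := by
      simpa using (hasDerivAt_id (0 : ℝ)).mul_const s
    have h2 : HasDerivAt ((fun u => smul₂ u x) ∘ fun u : ℝ => u * s) (s • B x) 0 :=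
      (hB x).scomp_of_eq 0 h1 (by simp)
    have h3 : ((fun u => smul₂ u x) ∘ fun u : ℝ => u * s) = fun u => smul₂ u (smul₂ s x) := by
      funext u
      simp only [Function.comp]
      rw [h_mul]
    rw [h3] at h2
    show deriv (fun u => smul₂ u (smul₂ s x)) 0 = s • B x
    exact h2.deriv
  -- B is additive for the ambient structure
  have hU : UniqueDiffWithinAt ℝ (Ici (0 : ℝ)) 0 := uniqueDiffOn_Ici 0 0 self_mem_Ici
  have hBadd : ∀ x y, B (x + y) = B x + B y := by
    intro x y
    have e2 : HasDerivWithinAt (fun u => smul₂ u x + smul₂ u y) (B x + B y) (Ici 0) 0 :=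
      ((hB x).add (hB y)).hasDerivWithinAt
    have e4 : HasDerivWithinAt (fun u => smul₂ u (x + y)) (B x + B y) (Ici 0) 0 :=
      e2.congr (fun u hu => hlin u hu x y) (hlin 0 le_rfl x y)
    have h5 := e4.derivWithin hU
    rw [((hγd (x + y)) 0).derivWithin hU] at h5
    exact h5
  have hB0 : B (0 : V) = 0 := by
    have h6 : (fun t => smul₂ t (0 : V)) = fun _ : ℝ => (0 : V) := by
      funext t; rw [← hz, hszero]
    show deriv (fun t => smul₂ t (0 : V)) 0 = 0
    rw [h6]
    exact deriv_const 0 0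
  have hBneg : ∀ v, B (-v) = -B v := by
    intro v
    have h1 := hBadd (-v) v
    rw [neg_add_cancel, hB0] at h1
    exact eq_neg_of_add_eq_zero_left h1.symm
  -- B is homogeneous for the ambient structure
  have hBsmulnn : ∀ c : ℝ, 0 ≤ c → ∀ x, B (c • x) = c • B x := by
    intro c hc x
    have e2 : HasDerivWithinAt (fun u => c • smul₂ u x) (c • B x) (Ici 0) 0 :=
      ((hB x).const_smul c).hasDerivWithinAt
    have e4 : HasDerivWithinAt (fun u => smul₂ u (c • x)) (c • B x) (Ici 0) 0 :=
      e2.congr (fun u hu => h_comm u c hu hc x) (h_comm 0 c le_rfl hc x)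
    have h5 := e4.derivWithin hU
    rw [((hγd (c • x)) 0).derivWithin hU] at h5
    exact h5
  have hBsmul : ∀ (c : ℝ) (x : V), B (c • x) = c • B x := by
    intro c x
    rcases le_or_gt 0 c with hc | hc
    · exact hBsmulnn c hc x
    · have h1 : c • x = -((-c) • x) := by rw [neg_smul, neg_neg]
      rw [h1, hBneg, hBsmulnn (-c) (by linarith), neg_smul, neg_neg]
  -- B intertwines the additions
  have hBadd₂ : ∀ x y, B (add₂ x y) = B x + B y := by
    intro x y
    set G : V × V → V := fun p => add₂ p.1 p.2 with hGdef
    set D := fderiv ℝ G (0, 0) with hDdef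
    have hG : HasFDerivAt G D (0, 0) := (hGd (0, 0)).hasFDerivAt
    have hD1 : ∀ u : V, D (u, 0) = u := by
      have c1 : HasFDerivAt (G ∘ fun e : V => (e, (0 : V)))
          (D.comp (ContinuousLinearMap.inl ℝ V V)) 0 :=
        HasFDerivAt.comp (f := fun e : V => (e, (0 : V))) (0 : V) hG (hasFDerivAt_prodMk_left (0 : V) (0 : V))
      have c2 : (G ∘ fun e : V => (e, (0 : V))) = fun u : V => u := by
        funext u
        show add₂ u 0 = u
        rw [← hz, h_add_comm, h_zero]
      rw [c2] at c1
      have c3 := c1.unique (hasFDerivAt_id 0)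
      intro u
      have := congrArg (fun L : V →L[ℝ] V => L u) c3
      simpa using this
    have hD2 : ∀ v : V, D (0, v) = v := by
      have c1 : HasFDerivAt (G ∘ fun e : V => ((0 : V), e))
          (D.comp (ContinuousLinearMap.inr ℝ V V)) 0 :=
        HasFDerivAt.comp (f := fun e : V => ((0 : V), e)) (0 : V) hG (hasFDerivAt_prodMk_right (0 : V) (0 : V))
      have c2 : (G ∘ fun e : V => ((0 : V), e)) = fun u : V => u := by
        funext u
        show add₂ 0 u = u
        rw [← hz, h_zero]
      rw [c2] at c1
      have c3 := c1.unique (hasFDerivAt_id 0)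
      intro v
      have := congrArg (fun L : V →L[ℝ] V => L v) c3
      simpa using this
    have hD : ∀ u v : V, D (u, v) = u + v := by
      intro u v
      have h1 : ((u, v) : V × V) = (u, 0) + (0, v) := by simp
      rw [h1, map_add, hD1, hD2]
    have hcurve : HasDerivAt (fun u : ℝ => ((smul₂ u x, smul₂ u y) : V × V)) (B x, B y) 0 :=
      (hB x).prodMk (hB y)
    have hcomp : HasDerivAt (fun u : ℝ => G (smul₂ u x, smul₂ u y)) (D (B x, B y)) 0 :=
      hG.comp_hasDerivAt_of_eq 0 hcurve (by rw [h0x' x, h0x' y])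
    have h4 : (fun u : ℝ => G (smul₂ u x, smul₂ u y)) = fun u => smul₂ u (add₂ x y) := by
      funext u
      exact (h_distrib u x y).symm
    rw [h4] at hcomp
    show deriv (fun u => smul₂ u (add₂ x y)) 0 = B x + B y
    rw [hcomp.deriv]
    exact hD _ _
  -- injectivity of B
  have hinj0 : ∀ x, B x = 0 → x = 0 := by
    intro x hx
    have hds : ∀ s : ℝ, HasDerivAt (fun t => smul₂ t x) 0 s := by
      intro s
      set G : V × V → V := fun p => add₂ p.1 p.2 with hGdef
      have hG : HasFDerivAt G (fderiv ℝ G (0, smul₂ s x)) (0, smul₂ s x) :=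
        (hGd (0, smul₂ s x)).hasFDerivAt
      have hin : HasDerivAt (fun u : ℝ => u - s) 1 s := (hasDerivAt_id s).sub_const s
      have hB00 : HasDerivAt (fun t => smul₂ t x) 0 0 := by rw [← hx]; exact hB x
      have h1 : HasDerivAt ((fun t => smul₂ t x) ∘ fun u : ℝ => u - s) ((1 : ℝ) • (0 : V)) s :=
        hB00.scomp_of_eq s hin (by simp)
      have h1' : HasDerivAt (fun u : ℝ => smul₂ (u - s) x) 0 s := by
        simpa [Function.comp_def] using h1
      have hcurve : HasDerivAt (fun u : ℝ => ((smul₂ (u - s) x, smul₂ s x) : V × V))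
          ((0 : V), (0 : V)) s := h1'.prodMk (hasDerivAt_const s (smul₂ s x))
      have hcomp : HasDerivAt (fun u : ℝ => G (smul₂ (u - s) x, smul₂ s x))
          (fderiv ℝ G (0, smul₂ s x) (0, 0)) s :=
        hG.comp_hasDerivAt_of_eq s hcurve (by rw [sub_self, h0x'])
      have h4 : (fun u : ℝ => G (smul₂ (u - s) x, smul₂ s x)) = fun u => smul₂ u x := by
        funext u
        show add₂ (smul₂ (u - s) x) (smul₂ s x) = smul₂ u x
        rw [← h_distrib', sub_add_cancel]
      rw [h4] at hcomp
      have hval : fderiv ℝ G (0, smul₂ s x) ((0 : V), (0 : V)) = 0 := by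
        have : ((0 : V), (0 : V)) = (0 : V × V) := rfl
        rw [this, map_zero]
      rwa [hval] at hcomp
    have hconst := is_const_of_deriv_eq_zero (hγd x) (fun s => (hds s).deriv) 1 0
    calc x = smul₂ 1 x := (h_one x).symm
      _ = smul₂ 0 x := hconst
      _ = 0 := h0x' x
  have hinj : ∀ a b, B a = B b → a = b := by
    intro a b h
    have h1 : B (a - b) = 0 := by
      rw [sub_eq_add_neg, hBadd, hBneg, h, add_neg_cancel]
    exact sub_eq_zero.mp (hinj0 _ h1)
  refine ⟨hz, ?_, ?_⟩
  · intro x y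
    apply hinj
    rw [hBadd₂, hBadd]
  · intro t x
    apply hinj
    rw [hBsmul₂, hBsmul]
end

section
/- A linear map between finite-dimensional real vector spaces is characterized by commuting with homotheties: if φ : V¹ → V² is a smooth map between finite-dimensional real vector spaces satisfying φ(t·x) = t·φ(x) for all t ≥ 0 and x ∈ V¹, then φ is linear. -/
open Filter Topology

/-- Blowing up by `c → ∞`, the difference quotient `c • (f (c⁻¹ • v) - f 0)` is constant, equal
to `f v`, by homogeneity; its limit is `f' v`. -/
theorem HasFDerivAt.eq_of_map_smul_of_nonneg {E F : Type*} [NormedAddCommGroup E]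
    [NormedSpace ℝ E] [NormedAddCommGroup F] [NormedSpace ℝ F] {f : E → F} {f' : E →L[ℝ] F}
    (hf : HasFDerivAt f f' 0) (hhom : ∀ t : ℝ, 0 ≤ t → ∀ x, f (t • x) = t • f x) :
    f = f' := by
  have hf0 : f 0 = 0 := by simpa using hhom 0 le_rfl 0
  funext v
  have hquot : (fun c : ℝ => c • (f (0 + c⁻¹ • v) - f 0)) =ᶠ[atTop] fun _ => f v := by
    filter_upwards [eventually_gt_atTop 0] with c hc
    rw [zero_add, hhom _ (inv_nonneg.mpr hc.le), hf0, sub_zero, smul_smul,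
      mul_inv_cancel₀ hc.ne', one_smul]
  exact tendsto_nhds_unique (tendsto_const_nhds.congr' hquot.symm) (hf.lim_real v)

theorem stmt7_general {V W : Type*} [NormedAddCommGroup V] [NormedSpace ℝ V]
    [NormedAddCommGroup W] [NormedSpace ℝ W]
    (φ : V → W) (hφ : ContDiff ℝ 1 φ)
    (hhom : ∀ t : ℝ, 0 ≤ t → ∀ x, φ (t • x) = t • φ x) :
    IsLinearMap ℝ φ := by
  rw [(hφ.differentiable one_ne_zero 0).hasFDerivAt.eq_of_map_smul_of_nonneg hhom]
  exact (fderiv ℝ φ 0).isLinear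

/-- A smooth map between finite-dimensional real vector spaces which commutes
with homotheties (`φ (t • x) = t • φ x` for all `t ≥ 0`) is linear. -/
theorem stmt7 {V W : Type*} [NormedAddCommGroup V] [NormedSpace ℝ V] [FiniteDimensional ℝ V]
    [NormedAddCommGroup W] [NormedSpace ℝ W] [FiniteDimensional ℝ W]
    (φ : V → W) (hφ : ContDiff ℝ 1 φ)
    (hhom : ∀ t : ℝ, 0 ≤ t → ∀ x, φ (t • x) = t • φ x) :
    IsLinearMap ℝ φ :=
  stmt7_general φ hφ hhom
end
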